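/- arXiv:2008.10467 — 2 statements merged into one kernel-verified Lean document; each statement's English description precedes it below -/
import Mathlib

section
/- Let N ≥ 1 and let e, G : Fin N → ℝ be vectors with G i < 0 for every i. Let 0 < γ₂ ≤ γ₁ and let h : ℝ → ℝ satisfy the slope bounds −γ₁ ≤ (h x − h y)/(x − y) ≤ −γ₂ for all x ≠ y. Let a, â ∈ ℝ with e (last index) = a − â, and suppose either e i ≤ 0 for all i or e i ≥ 0 for all i. Then −(∑ i, e i * G i) * (h a − h â) ≤ (∑ i, e i * G i) * γ₂ * (a − â). -/
/-! Every term of `(∑ i, e i * G i) * e j` is `G i * (e i * e j)`, a nonpositive gain times a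
product of two entries of the same sign, so `eᵀG` and the last error `a - ahat` have opposite
signs. Writing `h a - h ahat = q * (a - ahat)` with slope `q ≤ -γ₂` then gives the claim. -/

theorem Finset.sum_mul_mul_apply_nonpos_of_sign {ι R : Type*} [Fintype ι] [CommRing R]
    [LinearOrder R] [IsStrictOrderedRing R] {e G : ι → R} (hG : ∀ i, G i ≤ 0)
    (hsign : (∀ i, e i ≤ 0) ∨ (∀ i, 0 ≤ e i)) (j : ι) :
    (∑ i, e i * G i) * e j ≤ 0 := by
  rw [Finset.sum_mul]
  refine Finset.sum_nonpos fun i _ => ?_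
  have hsame : 0 ≤ e i * e j := by
    rcases hsign with hs | hs
    · exact mul_nonneg_of_nonpos_of_nonpos (hs i) (hs j)
    · exact mul_nonneg (hs i) (hs j)
  calc e i * G i * e j = G i * (e i * e j) := by ring
    _ ≤ 0 := mul_nonpos_of_nonpos_of_nonneg (hG i) hsame

theorem neg_mul_sub_le_of_slope_le {h : ℝ → ℝ} {γ c x y : ℝ}
    (hslope : x ≠ y → (h x - h y) / (x - y) ≤ -γ) (hc : c * (x - y) ≤ 0) :
    -c * (h x - h y) ≤ c * γ * (x - y) := by
  rcases eq_or_ne x y with rfl | hne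
  · simp
  set q := (h x - h y) / (x - y)
  have hdiff : h x - h y = q * (x - y) := (div_mul_cancel₀ _ (sub_ne_zero.mpr hne)).symm
  have hq : 0 ≤ -q - γ := by linarith [hslope hne]
  calc -c * (h x - h y) = c * γ * (x - y) + (-q - γ) * (c * (x - y)) := by rw [hdiff]; ring
    _ ≤ c * γ * (x - y) := by linarith [mul_nonpos_of_nonneg_of_nonpos hq hc]

/-- Cathode part of the paper's Lemma 1: for a gain vector `G` with all negative
entries, an error vector `e` whose components have a uniform sign, and a strictly
monotonically decreasing nonlinearity `h` with difference quotients between `-γ₁`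
and `-γ₂`, one has `-(eᵀG) * (h a - h ahat) ≤ (eᵀG) * γ₂ * (a - ahat)`. -/
theorem stmt_0 (N : ℕ) (hN : 1 ≤ N) (e G : Fin N → ℝ)
    (hG : ∀ i, G i < 0)
    (γ₁ γ₂ : ℝ)
    (h : ℝ → ℝ)
    (hslope : ∀ x y : ℝ, x ≠ y →
      -γ₁ ≤ (h x - h y) / (x - y) ∧ (h x - h y) / (x - y) ≤ -γ₂)
    (a ahat : ℝ)
    (hlast : e ⟨N - 1, Nat.sub_lt (by omega) one_pos⟩ = a - ahat)
    (hsign : (∀ i, e i ≤ 0) ∨ (∀ i, 0 ≤ e i)) :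
    -(∑ i, e i * G i) * (h a - h ahat) ≤ (∑ i, e i * G i) * γ₂ * (a - ahat) := by
  have hopposite : (∑ i, e i * G i) * (a - ahat) ≤ 0 :=
    hlast ▸ Finset.sum_mul_mul_apply_nonpos_of_sign (fun i => (hG i).le) hsign _
  exact neg_mul_sub_le_of_slope_le (fun hne => (hslope a ahat hne).2) hopposite
end

section
/- Let A, F, M, ρ, a, Lₙ, Lₛ, Lₚ, Rₙ, κₙ, κₛ, κₚ, κ_sei, εₙ, ε_f be strictly positive real numbers, let L₀, Q₀ ∈ ℝ, and let t ≥ 0. Let L_sei, Q, R_sei, R_pf : ℝ → ℝ with L_sei 0 = L₀, Q 0 = Q₀, and R_pf 0 = 0, and define R_e : ℝ → ℝ by R_e s = (1/(2A)) * ( Lₙ / (κₙ * (1 − εₙ * (1 + 3 * L_sei s / Rₙ) − ε_f)^(3/2)) + 2 Lₛ / κₛ + Lₚ / κₚ ). Suppose there are functions l, r : ℝ → ℝ such that for every s ∈ [0, t]: L_sei has derivative l s at s, Q has derivative −(l s) * 2 F ρ a A Lₙ / (3600 M) at s, R_sei has derivative (l s)/(a A Lₙ κ_sei) at s, R_e has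 derivative r s at s, and R_pf has derivative (l s)/(a A Lₙ κ_sei) + r s at s. Then R_pf t = (1/(2A)) * ( Lₙ / (κₙ * (1 − εₙ * (1 + (3/Rₙ) * (L₀ − 3600 * (Q t − Q₀) * M / (2 F A Lₙ a ρ))) − ε_f)^(3/2)) + 2 Lₛ / κₛ + Lₚ / κₚ ) − R_e 0 − 3600 * (Q t − Q₀) * M / (2 F ρ A² a² Lₙ² κ_sei). -/
/-
All rate laws are driven by the SEI growth rate dL_sei/dt: the capacity rate is a fixed negative
multiple of dL_sei/dt, and dR_pf/dt − dR_e/dt is a fixed positive multiple of it. So on [0, t]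
the increments of Q and of R_pf − R_e are proportional to L_sei t − L₀; eliminating that
increment expresses L_sei t, hence R_e t, and the SEI resistance through the capacity loss.
-/

open Set

lemma sub_eq_mul_sub_of_hasDerivAt_mul {f g g' : ℝ → ℝ} {a b c : ℝ} (hab : a ≤ b)
    (hf : ∀ s ∈ Icc a b, HasDerivAt f (c * g' s) s)
    (hg : ∀ s ∈ Icc a b, HasDerivAt g (g' s) s) :
    f b - f a = c * (g b - g a) := by
  have hderiv : ∀ s ∈ Icc a b, HasDerivAt (fun x => f x - c * g x) 0 s := fun s hs =>
    ((hf s hs).sub ((hg s hs).const_mul c)).congr_deriv (sub_self _)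
  have hconst := constant_of_has_deriv_right_zero
    (fun s hs => (hderiv s hs).continuousAt.continuousWithinAt)
    (fun s hs => (hderiv s (Ico_subset_Icc_self hs)).hasDerivWithinAt) b (right_mem_Icc.2 hab)
  linear_combination hconst

theorem stmt_13_general (A F M ρ a Lₙ Lₛ Lₚ Rₙ κₙ κₛ κₚ κ_sei εₙ ε_f : ℝ)
    (hA : 0 < A) (hF : 0 < F) (hM : 0 < M) (hρ : 0 < ρ) (ha : 0 < a)
    (hLₙ : 0 < Lₙ)
    (L₀ Q₀ t : ℝ) (ht : 0 ≤ t)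
    (L_sei Q R_pf : ℝ → ℝ)
    (hL0 : L_sei 0 = L₀) (hQ0 : Q 0 = Q₀) (hRpf0 : R_pf 0 = 0)
    (R_e : ℝ → ℝ)
    (hRe : ∀ s : ℝ, R_e s = (1 / (2 * A)) *
      (Lₙ / (κₙ * (1 - εₙ * (1 + 3 * L_sei s / Rₙ) - ε_f) ^ ((3 : ℝ) / 2))
        + 2 * Lₛ / κₛ + Lₚ / κₚ))
    (l r : ℝ → ℝ)
    (hL : ∀ s ∈ Set.Icc (0 : ℝ) t, HasDerivAt L_sei (l s) s)
    (hQ : ∀ s ∈ Set.Icc (0 : ℝ) t,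
      HasDerivAt Q (-(l s) * 2 * F * ρ * a * A * Lₙ / (3600 * M)) s)
    (hReDeriv : ∀ s ∈ Set.Icc (0 : ℝ) t, HasDerivAt R_e (r s) s)
    (hRpf : ∀ s ∈ Set.Icc (0 : ℝ) t,
      HasDerivAt R_pf (l s / (a * A * Lₙ * κ_sei) + r s) s) :
    R_pf t = (1 / (2 * A)) *
      (Lₙ / (κₙ * (1 - εₙ * (1 + (3 / Rₙ) *
          (L₀ - 3600 * (Q t - Q₀) * M / (2 * F * A * Lₙ * a * ρ))) - ε_f)
          ^ ((3 : ℝ) / 2))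
        + 2 * Lₛ / κₛ + Lₚ / κₚ)
      - R_e 0
      - 3600 * (Q t - Q₀) * M / (2 * F * ρ * A ^ 2 * a ^ 2 * Lₙ ^ 2 * κ_sei) := by
  have hcapacity : Q t - Q₀ = -(2 * F * ρ * a * A * Lₙ / (3600 * M)) * (L_sei t - L₀) := by
    rw [← hQ0, ← hL0]
    exact sub_eq_mul_sub_of_hasDerivAt_mul ht
      (fun s hs => (hQ s hs).congr_deriv (by ring)) hL
  have hresistance :
      R_pf t - R_e t - (R_pf 0 - R_e 0) = (a * A * Lₙ * κ_sei)⁻¹ * (L_sei t - L₀) := by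
    rw [← hL0]
    exact sub_eq_mul_sub_of_hasDerivAt_mul (f := fun s => R_pf s - R_e s) ht
      (fun s hs => ((hRpf s hs).sub (hReDeriv s hs)).congr_deriv (by ring)) hL
  have hthickness : L_sei t = L₀ - 3600 * (Q t - Q₀) * M / (2 * F * A * Lₙ * a * ρ) := by
    rw [hcapacity]
    field_simp
    ring
  rw [hRpf0, hRe t, mul_div_right_comm 3 (L_sei t), hthickness] at hresistance
  linear_combination hresistance

/-- The paper's derived power-fade/capacity-fade relationship (equation (14)):
the power-fade resistance at time `t` is expressed purely in terms of the
capacity loss `Q t - Q₀`. -/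
theorem stmt_13 (A F M ρ a Lₙ Lₛ Lₚ Rₙ κₙ κₛ κₚ κ_sei εₙ ε_f : ℝ)
    (hA : 0 < A) (hF : 0 < F) (hM : 0 < M) (hρ : 0 < ρ) (ha : 0 < a)
    (hLₙ : 0 < Lₙ) (hLₛ : 0 < Lₛ) (hLₚ : 0 < Lₚ) (hRₙ : 0 < Rₙ)
    (hκₙ : 0 < κₙ) (hκₛ : 0 < κₛ) (hκₚ : 0 < κₚ) (hκ_sei : 0 < κ_sei)
    (hεₙ : 0 < εₙ) (hε_f : 0 < ε_f)
    (L₀ Q₀ t : ℝ) (ht : 0 ≤ t)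
    (L_sei Q R_sei R_pf : ℝ → ℝ)
    (hL0 : L_sei 0 = L₀) (hQ0 : Q 0 = Q₀) (hRpf0 : R_pf 0 = 0)
    (R_e : ℝ → ℝ)
    (hRe : ∀ s : ℝ, R_e s = (1 / (2 * A)) *
      (Lₙ / (κₙ * (1 - εₙ * (1 + 3 * L_sei s / Rₙ) - ε_f) ^ ((3 : ℝ) / 2))
        + 2 * Lₛ / κₛ + Lₚ / κₚ))
    (l r : ℝ → ℝ)
    (hL : ∀ s ∈ Set.Icc (0 : ℝ) t, HasDerivAt L_sei (l s) s)
    (hQ : ∀ s ∈ Set.Icc (0 : ℝ) t,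
      HasDerivAt Q (-(l s) * 2 * F * ρ * a * A * Lₙ / (3600 * M)) s)
    (hRsei : ∀ s ∈ Set.Icc (0 : ℝ) t,
      HasDerivAt R_sei (l s / (a * A * Lₙ * κ_sei)) s)
    (hReDeriv : ∀ s ∈ Set.Icc (0 : ℝ) t, HasDerivAt R_e (r s) s)
    (hRpf : ∀ s ∈ Set.Icc (0 : ℝ) t,
      HasDerivAt R_pf (l s / (a * A * Lₙ * κ_sei) + r s) s) :
    R_pf t = (1 / (2 * A)) *
      (Lₙ / (κₙ * (1 - εₙ * (1 + (3 / Rₙ) *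
          (L₀ - 3600 * (Q t - Q₀) * M / (2 * F * A * Lₙ * a * ρ))) - ε_f)
          ^ ((3 : ℝ) / 2))
        + 2 * Lₛ / κₛ + Lₚ / κₚ)
      - R_e 0
      - 3600 * (Q t - Q₀) * M / (2 * F * ρ * A ^ 2 * a ^ 2 * Lₙ ^ 2 * κ_sei) :=
  stmt_13_general A F M ρ a Lₙ Lₛ Lₚ Rₙ κₙ κₛ κₚ κ_sei εₙ ε_f hA hF hM hρ ha hLₙ L₀ Q₀ t ht L_sei Q
    R_pf hL0 hQ0 hRpf0 R_e hRe l r hL hQ hReDeriv hRpf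
end
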